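/- arXiv:1809.05221 — 5 statements merged into one kernel-verified Lean document; each statement's English description precedes it below -/
import Mathlib

section
/- Let p be an odd prime, e ≥ 1, and let Ω_e(p) be the set of positive integers N expressible as N = h·p^e + Σ_{i=1}^{e} (1/2)(p^e - p^{e-i})x_i with nonnegative integers h, x_1,…,x_e. Then N ∈ Ω_e(p) if and only if S_e(2N) ≥ (e - τ(N))(p-1), where 2N = a_0 + a_1 p + ⋯ + a_{e-1}p^{e-1} + a_e p^e with 0 ≤ a_i < p for i < e and a_e ≥ 0, S_e(2N) = Σ_{i=0}^{e} a_i, and τ(N) is the least index j with a_j ≠ 0. -/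
/-!
Write `S = truncDigitSum p e`. The truncated Legendre formula
`S n + (p - 1) * Σ_{i=1}^e ⌊n / p^i⌋ = n` turns Kummer's carry count into a digit-sum identity:
if `m + n = K p^e` then `S m + S n = K + (p - 1) * #{1 ≤ i ≤ e | p^i ∤ m}`, and for `m > 0`
this count is `e - τ`. Writing `n = Σ p^(e-i) x_i`, the equation defining `Ω_e(p)` reads
`2N + n = (2h + Σ x_i) p^e`. Since `S n ≤ Σ x_i`, a representation forces
`(e - τ)(p - 1) ≤ S (2N)`. Conversely, complete `2N` to a multiple `K p^e` by some `n < p^e` and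
take for `x` the digits of `n`: then `Σ x_i = S n ≤ K`, and `K - Σ x_i` is even because
`S n ≡ n (mod p - 1)` and `p` is odd.
-/

open Finset

def truncDigit (p e n j : ℕ) : ℕ := if j < e then n / p ^ j % p else n / p ^ e

def truncDigitSum (p e n : ℕ) : ℕ := ∑ j ∈ range (e + 1), truncDigit p e n j

theorem Nat.sum_range_pow_mul_div_pow_mod (p e n : ℕ) :
    ∑ j ∈ range e, p ^ j * (n / p ^ j % p) = n % p ^ e := by
  induction e with
  | zero => simp [Nat.mod_one]
  | succ e ih => rw [sum_range_succ, ih, Nat.mod_pow_succ]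

theorem Nat.pow_dvd_iff_forall_div_pow_mod_eq_zero {p : ℕ} (hp : 0 < p) (i n : ℕ) :
    p ^ i ∣ n ↔ ∀ j < i, n / p ^ j % p = 0 := by
  rw [Nat.dvd_iff_mod_eq_zero, ← Nat.sum_range_pow_mul_div_pow_mod, sum_eq_zero_iff]
  simp [hp.ne']

theorem Finset.sum_Icc_one_sub_eq_sum_range {M : Type*} [AddCommMonoid M] (e : ℕ) (f : ℕ → M) :
    ∑ i ∈ Icc 1 e, f (e - i) = ∑ j ∈ range e, f j :=
  sum_nbij' (e - ·) (e - ·) (by simp; omega) (by simp; omega) (by simp; omega)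
    (by simp; omega) fun _ _ => rfl

theorem Nat.exists_lt_add_eq_mul {q : ℕ} (hq : 0 < q) (m : ℕ) : ∃ n K, n < q ∧ m + n = K * q := by
  by_cases hdvd : q ∣ m
  · exact ⟨0, m / q, hq, by rw [add_zero, Nat.div_mul_cancel hdvd]⟩
  · have hm0 : m % q ≠ 0 := fun h0 => hdvd (Nat.dvd_of_mod_eq_zero h0)
    refine ⟨q - m % q, m / q + 1, by omega, ?_⟩
    have := Nat.div_add_mod' m q
    have := Nat.mod_lt m hq
    rw [add_one_mul]
    omega

theorem Nat.add_div_of_dvd_add {m n q : ℕ} (hq : 0 < q) (h : q ∣ m + n) :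
    (m + n) / q = m / q + n / q + if q ∣ m then 0 else 1 := by
  have hmod : q ∣ m % q + n % q := by
    rw [Nat.dvd_iff_mod_eq_zero, ← Nat.add_mod]
    exact Nat.dvd_iff_mod_eq_zero.mp h
  rw [Nat.add_div hq]
  congr 1
  by_cases hm : q ∣ m
  · rw [if_pos hm, if_neg]
    rw [Nat.dvd_iff_mod_eq_zero.mp hm, zero_add, not_le]
    exact Nat.mod_lt n hq
  · rw [if_neg hm, if_pos]
    have hm0 : m % q ≠ 0 := fun h0 => hm (Nat.dvd_of_mod_eq_zero h0)
    exact Nat.le_of_dvd (by omega) hmod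

/-- For `0 < n`, the index of the first nonzero truncated digit is `min (v_p n) e`. -/
theorem card_filter_not_pow_dvd_eq_sub_sInf {p : ℕ} (e : ℕ) (hp : 0 < p) {n : ℕ} (hn : 0 < n) :
    #{i ∈ Icc 1 e | ¬ p ^ i ∣ n} = e - sInf {j | truncDigit p e n j ≠ 0} := by
  have hdvd : ∀ i ≤ e, p ^ i ∣ n ↔ ∀ j < i, truncDigit p e n j = 0 := fun i hi => by
    rw [Nat.pow_dvd_iff_forall_div_pow_mod_eq_zero hp]
    exact forall₂_congr fun j hj => by rw [truncDigit, if_pos (by omega)]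
  have hne : {j | truncDigit p e n j ≠ 0}.Nonempty := by
    by_contra h0
    have hzero : ∀ j, truncDigit p e n j = 0 := fun j => by_contra fun hj => h0 ⟨j, hj⟩
    refine hn.ne' (Nat.eq_zero_of_dvd_of_div_eq_zero ((hdvd e le_rfl).mpr fun j _ => hzero j) ?_)
    simpa [truncDigit] using hzero e
  have hτ : ∀ i ≤ e, p ^ i ∣ n ↔ i ≤ sInf {j | truncDigit p e n j ≠ 0} := fun i hi => by
    rw [hdvd i hi, le_csInf_iff' hne]
    exact forall_congr' fun j => by rw [Set.mem_ofPred_eq, ← not_lt, not_imp_not]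
  rw [← Nat.card_Ioc]
  congr 1
  ext i
  simp only [mem_filter, mem_Icc, mem_Ioc]
  constructor
  · rintro ⟨⟨-, hie⟩, hi⟩
    exact ⟨not_le.mp ((hτ i hie).not.mp hi), hie⟩
  · rintro ⟨hi, hie⟩
    exact ⟨⟨by omega, hie⟩, (hτ i hie).not.mpr (not_le.mpr hi)⟩

namespace truncDigitSum

variable {p : ℕ} (e : ℕ)

theorem eq_sum_add (n : ℕ) :
    truncDigitSum p e n = ∑ j ∈ range e, n / p ^ j % p + n / p ^ e := by
  rw [truncDigitSum, sum_range_succ, truncDigit, if_neg (lt_irrefl e)]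
  congr 1
  exact sum_congr rfl fun j hj => if_pos (mem_range.mp hj)

theorem succ_add (hp : 0 < p) (n : ℕ) :
    truncDigitSum p (e + 1) n + (p - 1) * (n / p ^ (e + 1)) = truncDigitSum p e n := by
  have hdigit : n / p ^ e % p + p * (n / p ^ (e + 1)) = n / p ^ e := by
    rw [pow_succ, ← Nat.div_div_eq_div_mul, Nat.mod_add_div]
  have hp1 : (p - 1) * (n / p ^ (e + 1)) + n / p ^ (e + 1) = p * (n / p ^ (e + 1)) := by
    rw [← add_one_mul, Nat.sub_one_add_one hp.ne']
  rw [eq_sum_add, eq_sum_add, sum_range_succ]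
  omega

/-- Legendre's formula, truncated at the `e`-th digit. -/
theorem add_sub_one_mul_sum_div (hp : 0 < p) (n : ℕ) :
    truncDigitSum p e n + (p - 1) * ∑ i ∈ Icc 1 e, n / p ^ i = n := by
  induction e with
  | zero => simp [eq_sum_add]
  | succ e ih =>
    have := succ_add e hp n
    rw [sum_Icc_succ_top (by omega), mul_add]
    omega

theorem le_self (hp : 0 < p) (n : ℕ) : truncDigitSum p e n ≤ n :=
  (Nat.le_add_right _ _).trans (add_sub_one_mul_sum_div e hp n).le

theorem add_le (hp : 0 < p) (a b : ℕ) :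
    truncDigitSum p e (a + b) ≤ truncDigitSum p e a + truncDigitSum p e b := by
  have hsum : ∑ i ∈ Icc 1 e, a / p ^ i + ∑ i ∈ Icc 1 e, b / p ^ i ≤
      ∑ i ∈ Icc 1 e, (a + b) / p ^ i := by
    rw [← sum_add_distrib]
    exact sum_le_sum fun i _ => Nat.div_add_div_le_add_div
  have := Nat.mul_le_mul_left (p - 1) hsum
  have ha := add_sub_one_mul_sum_div e hp a
  have hb := add_sub_one_mul_sum_div e hp b
  have hab := add_sub_one_mul_sum_div e hp (a + b)
  rw [mul_add] at this
  omega

theorem succ_base_mul (hp : 0 < p) (n : ℕ) :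
    truncDigitSum p (e + 1) (p * n) = truncDigitSum p e n := by
  have hshift : ∀ j, p * n / p ^ (j + 1) = n / p ^ j := fun j => by
    rw [pow_succ', Nat.mul_div_mul_left _ _ hp]
  simp only [eq_sum_add, sum_range_succ', hshift, pow_zero, Nat.div_one, Nat.mul_mod_right,
    add_zero]

theorem pow_mul_le (hp : 0 < p) {j : ℕ} (hj : j ≤ e) (n : ℕ) :
    truncDigitSum p e (p ^ j * n) ≤ n := by
  induction j generalizing e with
  | zero => simpa using le_self e hp n
  | succ j ih =>
    obtain ⟨e, rfl⟩ : ∃ e', e = e' + 1 := ⟨e - 1, by omega⟩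
    rw [pow_succ', mul_assoc, succ_base_mul e hp]
    exact ih e (by omega)

theorem sum_pow_mul_le (hp : 0 < p) (x : ℕ → ℕ) :
    truncDigitSum p e (∑ i ∈ Icc 1 e, p ^ (e - i) * x i) ≤ ∑ i ∈ Icc 1 e, x i :=
  (le_sum_of_subadditive _ (le_self e hp 0) (add_le e hp) _ _).trans
    (sum_le_sum fun _ _ => pow_mul_le e hp (Nat.sub_le _ _) _)

theorem mul_base_pow (hp : 0 < p) (K : ℕ) : truncDigitSum p e (K * p ^ e) = K := by
  have hdigit : ∀ j ∈ range e, K * p ^ e / p ^ j % p = 0 := fun j hj => by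
    rw [← Nat.dvd_iff_mod_eq_zero]
    apply Nat.dvd_div_of_mul_dvd
    rw [← pow_succ]
    exact (pow_dvd_pow p (mem_range.mp hj)).mul_left K
  rw [eq_sum_add, sum_eq_zero hdigit, Nat.mul_div_cancel _ (pow_pos hp e), zero_add]

theorem exists_sum_pow_mul_eq {n : ℕ} (hn : n < p ^ e) :
    ∃ x : ℕ → ℕ, ∑ i ∈ Icc 1 e, p ^ (e - i) * x i = n ∧
      ∑ i ∈ Icc 1 e, x i = truncDigitSum p e n := by
  refine ⟨fun i => n / p ^ (e - i) % p, ?_, ?_⟩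
  · rw [sum_Icc_one_sub_eq_sum_range e (fun j => p ^ j * (n / p ^ j % p)),
      Nat.sum_range_pow_mul_div_pow_mod, Nat.mod_eq_of_lt hn]
  · rw [sum_Icc_one_sub_eq_sum_range e (fun j => n / p ^ j % p), eq_sum_add,
      Nat.div_eq_of_lt hn, add_zero]

/-- Kummer's carry count, truncated at the `e`-th digit. -/
theorem add_eq_add_sub_one_mul_card (hp : 0 < p) {m n K : ℕ} (h : m + n = K * p ^ e) :
    truncDigitSum p e m + truncDigitSum p e n = K + (p - 1) * #{i ∈ Icc 1 e | ¬ p ^ i ∣ m} := by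
  have hcarry : ∑ i ∈ Icc 1 e, m / p ^ i + ∑ i ∈ Icc 1 e, n / p ^ i +
      #{i ∈ Icc 1 e | ¬ p ^ i ∣ m} = ∑ i ∈ Icc 1 e, (m + n) / p ^ i := by
    rw [card_filter, ← sum_add_distrib, ← sum_add_distrib]
    refine sum_congr rfl fun i hi => ?_
    rw [Nat.add_div_of_dvd_add (pow_pos hp i)]
    · by_cases hi' : p ^ i ∣ m <;> simp [hi']
    · rw [h]
      exact (pow_dvd_pow p (mem_Icc.mp hi).2).mul_left K
  have := congrArg ((p - 1) * ·) hcarry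
  have hm := add_sub_one_mul_sum_div e hp m
  have hn := add_sub_one_mul_sum_div e hp n
  have hmn := add_sub_one_mul_sum_div e hp (m + n)
  rw [show truncDigitSum p e (m + n) = K by rw [h, mul_base_pow e hp]] at hmn
  simp only [mul_add] at this
  omega

theorem even_iff (hp : Odd p) (n : ℕ) : Even (truncDigitSum p e n) ↔ Even n := by
  conv_rhs => rw [← add_sub_one_mul_sum_div e hp.pos n]
  simp [Nat.even_add, (Nat.Odd.sub_odd hp odd_one).mul_right]

end truncDigitSum

theorem sum_sub_pow_mul_add_sum_pow_mul {p : ℕ} (hp : 0 < p) (e : ℕ) (x : ℕ → ℕ) :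
    ∑ i ∈ Icc 1 e, (p ^ e - p ^ (e - i)) * x i + ∑ i ∈ Icc 1 e, p ^ (e - i) * x i =
      p ^ e * ∑ i ∈ Icc 1 e, x i := by
  rw [← sum_add_distrib, mul_sum]
  refine sum_congr rfl fun i _ => ?_
  rw [← add_mul, Nat.sub_add_cancel (Nat.pow_le_pow_right hp (Nat.sub_le e i))]

theorem sub_one_mul_card_le_truncDigitSum {p e h : ℕ} (hp : 0 < p) (x : ℕ → ℕ) {m : ℕ}
    (hm : m = 2 * h * p ^ e + ∑ i ∈ Icc 1 e, (p ^ e - p ^ (e - i)) * x i) :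
    (p - 1) * #{i ∈ Icc 1 e | ¬ p ^ i ∣ m} ≤ truncDigitSum p e m := by
  have hsum := sum_sub_pow_mul_add_sum_pow_mul hp e x
  have hkummer := truncDigitSum.add_eq_add_sub_one_mul_card e hp (m := m)
    (n := ∑ i ∈ Icc 1 e, p ^ (e - i) * x i) (K := 2 * h + ∑ i ∈ Icc 1 e, x i)
    (by rw [hm, add_assoc, hsum]; ring)
  have := truncDigitSum.sum_pow_mul_le e hp x
  omega

theorem exists_eq_of_sub_one_mul_card_le {p e m : ℕ} (hp : Odd p) (hm : Even m)
    (hS : (p - 1) * #{i ∈ Icc 1 e | ¬ p ^ i ∣ m} ≤ truncDigitSum p e m) :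
    ∃ h : ℕ, ∃ x : ℕ → ℕ, m = 2 * h * p ^ e + ∑ i ∈ Icc 1 e, (p ^ e - p ^ (e - i)) * x i := by
  obtain ⟨n, K, hn, hmn⟩ := Nat.exists_lt_add_eq_mul (pow_pos hp.pos e) m
  obtain ⟨x, hxn, hxS⟩ := truncDigitSum.exists_sum_pow_mul_eq e hn
  have hkummer := truncDigitSum.add_eq_add_sub_one_mul_card e hp.pos hmn
  rw [← hxS] at hkummer
  have hXK : ∑ i ∈ Icc 1 e, x i ≤ K := by omega
  obtain ⟨h, hh⟩ : Even (K - ∑ i ∈ Icc 1 e, x i) := by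
    have := congrArg Even hkummer
    simp only [Nat.even_add, (truncDigitSum.even_iff e hp m).mpr hm,
      (Nat.Odd.sub_odd hp odd_one).mul_right, true_iff, iff_true] at this
    rw [Nat.even_sub hXK, this]
  refine ⟨h, x, ?_⟩
  have hsum := sum_sub_pow_mul_add_sum_pow_mul hp.pos e x
  rw [hxn] at hsum
  have : K * p ^ e = 2 * h * p ^ e + p ^ e * ∑ i ∈ Icc 1 e, x i := by
    rw [show K = 2 * h + ∑ i ∈ Icc 1 e, x i by omega]
    ring
  omega

theorem stmt_4_general (p e N : ℕ) (hodd : Odd p) (hN : 0 < N) :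
    (∃ h : ℕ, ∃ x : ℕ → ℕ,
        2 * N = 2 * h * p ^ e + ∑ i ∈ Finset.Icc 1 e, (p ^ e - p ^ (e - i)) * x i) ↔
      (let a : ℕ → ℕ := fun i => if i < e then 2 * N / p ^ i % p else 2 * N / p ^ e
       let S : ℕ := ∑ i ∈ Finset.range (e + 1), a i
       let τ : ℕ := sInf {j | a j ≠ 0}
       (e - τ) * (p - 1) ≤ S) := by
  show _ ↔ (e - sInf {j | truncDigit p e (2 * N) j ≠ 0}) * (p - 1) ≤ truncDigitSum p e (2 * N)
  rw [← card_filter_not_pow_dvd_eq_sub_sInf e hodd.pos (by omega), mul_comm _ (p - 1)]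
  exact ⟨fun ⟨_, x, hx⟩ => sub_one_mul_card_le_truncDigitSum hodd.pos x hx,
    exists_eq_of_sub_one_mul_card_le hodd (even_two_mul N)⟩

/-- Characterization of `Ω_e(p)`: a positive integer `N` is of the form
`h p^e + Σ_{i=1}^e (1/2)(p^e - p^{e-i}) x_i` (nonnegative integers) iff
`S_e(2N) ≥ (e - τ(N))(p - 1)`, where `a_i` are the digits of `2N` in base `p`
(truncated at the `e`-th place), `S_e(2N)` is their sum and `τ(N)` the index of
the first nonzero digit. -/
theorem stmt_4 (p e N : ℕ) (hp : p.Prime) (hodd : Odd p) (he : 1 ≤ e) (hN : 0 < N) :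
    (∃ h : ℕ, ∃ x : ℕ → ℕ,
        2 * N = 2 * h * p ^ e + ∑ i ∈ Finset.Icc 1 e, (p ^ e - p ^ (e - i)) * x i) ↔
      (let a : ℕ → ℕ := fun i => if i < e then 2 * N / p ^ i % p else 2 * N / p ^ e
       let S : ℕ := ∑ i ∈ Finset.range (e + 1), a i
       let τ : ℕ := sInf {j | a j ≠ 0}
       (e - τ) * (p - 1) ≤ S) :=
  stmt_4_general p e N hodd hN
end

section
/- Let p be an odd prime and e ≥ 1. Every integer N ≥ σ_e(p) = (1/2)[e(p-1)p^e - 3(p^e-1)] can be written as N = h·p^e + Σ_{i=1}^{e} (1/2)(p^e - p^{e-i})x_i with nonnegative integers h, x_1, …, x_e, and σ_e(p) is minimal with this property, i.e., σ_e(p) is the least integer such that every integer greater than or equal to it is representable in this form. -/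
open Finset

lemma geom_aux (p : ℕ) (hp : 1 ≤ p) :
    ∀ e : ℕ, (∑ i ∈ Icc 1 e, p ^ (e - i) * (p - 1)) + 1 = p ^ e := by
  intro e
  induction e with
  | zero => simp
  | succ e ih =>
    rw [Finset.sum_Icc_succ_top (by omega)]
    have h1 : ∀ i ∈ Icc 1 e, p ^ (e + 1 - i) * (p - 1) = p * (p ^ (e - i) * (p - 1)) := by
      intro i hi
      simp only [mem_Icc] at hi
      have h2 : e + 1 - i = (e - i) + 1 := by omega
      rw [h2, pow_succ]
      ring
    rw [Finset.sum_congr rfl h1, ← Finset.mul_sum]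
    have h3 : e + 1 - (e + 1) = 0 := by omega
    rw [h3, pow_zero, one_mul, pow_succ]
    have h4 : p * ((∑ i ∈ Icc 1 e, p ^ (e - i) * (p - 1)) + 1) = p * p ^ e := by rw [ih]
    rw [Nat.mul_add, mul_one] at h4
    have h5 : p ^ e * p = p * p ^ e := by ring
    rw [h5]
    omega

lemma digit_aux (p : ℕ) (hp : 0 < p) :
    ∀ e c : ℕ, c < p ^ e →
      ∑ i ∈ Icc 1 e, p ^ (e - i) * (c / p ^ (e - i) % p) = c := by
  intro e
  induction e with
  | zero => intro c hc; simp at hc ⊢; omega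
  | succ e ih =>
    intro c hc
    rw [Finset.sum_Icc_succ_top (by omega)]
    have h1 : ∀ i ∈ Icc 1 e, p ^ (e + 1 - i) * (c / p ^ (e + 1 - i) % p)
        = p * (p ^ (e - i) * ((c / p) / p ^ (e - i) % p)) := by
      intro i hi
      simp only [mem_Icc] at hi
      have h2 : e + 1 - i = (e - i) + 1 := by omega
      rw [h2, pow_succ']
      rw [← Nat.div_div_eq_div_mul]
      ring
    rw [Finset.sum_congr rfl h1, ← Finset.mul_sum]
    have hclt : c / p < p ^ e := by
      rw [Nat.div_lt_iff_lt_mul hp]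
      calc c < p ^ (e + 1) := hc
        _ = p ^ e * p := pow_succ p e
    rw [ih (c / p) hclt]
    have h3 : e + 1 - (e + 1) = 0 := by omega
    rw [h3]
    simp only [pow_zero, one_mul, Nat.div_one]
    exact Nat.div_add_mod c p

lemma key_min (p : ℕ) (hp : 1 ≤ p) :
    ∀ e : ℕ, ∀ x : ℕ → ℕ, ∀ w m : ℕ,
      (∑ i ∈ Icc 1 e, p ^ (e - i) * x i) + w + 1 = p ^ e * m →
      e * (p - 1) + m ≤ (∑ i ∈ Icc 1 e, x i) + w + 1 := by
  intro e
  induction e with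
  | zero => intro x w m h; simp at h ⊢; omega
  | succ e ih =>
    intro x w m h
    rw [Finset.sum_Icc_succ_top (by omega)] at h
    rw [Finset.sum_Icc_succ_top (by omega)]
    have h1 : ∀ i ∈ Icc 1 e, p ^ (e + 1 - i) * x i = p * (p ^ (e - i) * x i) := by
      intro i hi
      simp only [mem_Icc] at hi
      have h2 : e + 1 - i = (e - i) + 1 := by omega
      rw [h2, pow_succ]
      ring
    rw [Finset.sum_congr rfl h1, ← Finset.mul_sum] at h
    have h3 : e + 1 - (e + 1) = 0 := by omega
    rw [h3, pow_zero, one_mul] at h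
    have hps : p ^ (e + 1) * m = p * (p ^ e * m) := by ring
    rw [hps] at h
    set U := ∑ i ∈ Icc 1 e, p ^ (e - i) * x i with hU
    -- h : p * U + x (e+1) + w + 1 = p * (p ^ e * m)
    have hUle : U ≤ p ^ e * m := by
      by_contra hcon
      push_neg at hcon
      have h6 : p * (p ^ e * m) < p * U := by
        exact Nat.mul_lt_mul_of_le_of_lt (le_refl p) hcon (by omega)
      omega
    obtain ⟨v, hv⟩ := Nat.exists_eq_add_of_le hUle
    have heq2 : p * (p ^ e * m) = p * U + p * v := by rw [hv]; ring
    have hxv : x (e + 1) + w + 1 = p * v := by omega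
    have hv1 : 1 ≤ v := by
      rcases Nat.eq_zero_or_pos v with h0 | h0
      · subst h0; simp at hxv
      · exact h0
    have hih := ih x (v - 1) m (by rw [hv]; omega)
    have hpv : v + (p - 1) * v = p * v := by
      have h7 : ((p - 1) + 1) * v = p * v := by
        congr 1
        omega
      rw [← h7]; ring
    have hp1v : (p - 1) * 1 ≤ (p - 1) * v := Nat.mul_le_mul_left _ hv1
    have hexp : (e + 1) * (p - 1) = e * (p - 1) + (p - 1) := by ring
    have hsub : v - 1 + 1 = v := by omega
    omega



/-- `σ_e(p) = (e(p-1)p^e - 3(p^e-1))/2` is the least integer `σ` such that every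
integer `N ≥ σ` is representable as `h p^e + Σ_{i=1}^e (1/2)(p^e - p^{e-i}) x_i`
with nonnegative integers `h, x_1, …, x_e`. -/
theorem stmt_5 (p e : ℕ) (hp : p.Prime) (hodd : Odd p) (he : 1 ≤ e) :
    IsLeast {σ : ℕ | ∀ N : ℕ, σ ≤ N →
        ∃ h : ℕ, ∃ x : ℕ → ℕ,
          2 * N = 2 * h * p ^ e + ∑ i ∈ Finset.Icc 1 e, (p ^ e - p ^ (e - i)) * x i}
      ((e * (p - 1) * p ^ e - 3 * (p ^ e - 1)) / 2) := by
  have hp2 : 2 ≤ p := hp.two_le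
  have hpo : p % 2 = 1 := Nat.odd_iff.mp hodd
  have hp3 : 3 ≤ p := by omega
  have hq0 : 0 < p ^ e := by positivity
  have hqo : p ^ e % 2 = 1 := Nat.odd_iff.mp (hodd.pow)
  -- basic facts about sigma
  have hEvenA : 2 ∣ e * (p - 1) * p ^ e := by
    have h1 : 2 ∣ p - 1 := by omega
    exact ((h1.mul_left e).mul_right (p ^ e))
  have hEvenB : 2 ∣ 3 * (p ^ e - 1) := by
    have h1 : 2 ∣ p ^ e - 1 := by omega
    exact h1.mul_left 3
  have hAB : 3 * (p ^ e - 1) ≤ e * (p - 1) * p ^ e := by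
    rcases le_or_gt 3 (e * (p - 1)) with h3 | h3
    · have := Nat.mul_le_mul_right (p ^ e) h3
      omega
    · have h2e : e * 2 ≤ e * (p - 1) := Nat.mul_le_mul_left e (by omega)
      have he1 : e = 1 := by omega
      have hple : p - 1 ≤ e * (p - 1) := by
        subst he1; omega
      have hp3' : p = 3 := by omega
      subst he1; subst hp3'; norm_num
  have hsig2 : 2 * ((e * (p - 1) * p ^ e - 3 * (p ^ e - 1)) / 2) + 3 * (p ^ e - 1)
      = e * (p - 1) * p ^ e := by omega
  constructor
  · -- membership: every N ≥ σ is representable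
    intro N hN
    have hNσ : e * (p - 1) * p ^ e ≤ 2 * N + 3 * (p ^ e - 1) := by omega
    -- choose c with 2N + c ≡ 0 mod p^e
    have hex : ∃ c M : ℕ, c < p ^ e ∧ 2 * N + c = p ^ e * M := by
      have hdm := Nat.div_add_mod (2 * N) (p ^ e)
      have hlt : 2 * N % p ^ e < p ^ e := Nat.mod_lt _ hq0
      rcases Nat.eq_zero_or_pos (2 * N % p ^ e) with h0 | h0
      · exact ⟨0, 2 * N / p ^ e, hq0, by omega⟩
      · refine ⟨p ^ e - 2 * N % p ^ e, 2 * N / p ^ e + 1, by omega, ?_⟩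
        have hr : p ^ e * (2 * N / p ^ e + 1) = p ^ e * (2 * N / p ^ e) + p ^ e := by ring
        omega
    obtain ⟨c, M, hc, hM⟩ := hex
    have hT : ∑ i ∈ Icc 1 e, p ^ (e - i) * (c / p ^ (e - i) % p) = c :=
      digit_aux p (by omega) e c hc
    -- parity : 2 ∣ c + S
    have hpar : 2 ∣ c + ∑ i ∈ Icc 1 e, (c / p ^ (e - i) % p) := by
      have hpar0 : 2 ∣ ∑ i ∈ Icc 1 e,
          (p ^ (e - i) * (c / p ^ (e - i) % p) + c / p ^ (e - i) % p) := by
        refine Finset.dvd_sum ?_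
        intro i hi
        have hoddq : Odd (p ^ (e - i)) := hodd.pow
        have h2 : 2 ∣ p ^ (e - i) + 1 := by
          obtain ⟨t, ht⟩ := hoddq; omega
        have hrw : p ^ (e - i) * (c / p ^ (e - i) % p) + c / p ^ (e - i) % p
            = (p ^ (e - i) + 1) * (c / p ^ (e - i) % p) := by ring
        rw [hrw]
        exact h2.mul_right _
      rw [Finset.sum_add_distrib, hT] at hpar0
      exact hpar0
    -- key inequality : q * S + (q - 1) ≤ e * (q * (p-1)) + c
    have hterm : ∀ i ∈ Icc 1 e,
        p ^ e * (c / p ^ (e - i) % p) + p ^ (e - i) * (p - 1)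
          ≤ p ^ e * (p - 1) + p ^ (e - i) * (c / p ^ (e - i) % p) := by
      intro i hi
      have hdlt : c / p ^ (e - i) % p < p := Nat.mod_lt _ (by omega)
      have hple : p ^ (e - i) ≤ p ^ e := Nat.pow_le_pow_right (by omega) (by omega)
      obtain ⟨k, hk⟩ := Nat.exists_eq_add_of_le (show c / p ^ (e - i) % p ≤ p - 1 by omega)
      obtain ⟨u, hu⟩ := Nat.exists_eq_add_of_le hple
      rw [hk, hu]
      nlinarith [Nat.zero_le (u * k)]
    have hsum := Finset.sum_le_sum hterm
    rw [Finset.sum_add_distrib, Finset.sum_add_distrib, ← Finset.mul_sum, hT,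
      Finset.sum_const, Nat.card_Icc, smul_eq_mul] at hsum
    have hgeom := geom_aux p (by omega) e
    -- hsum : p^e * S + (∑ p^(e-i)*(p-1)) ≤ (e+1-1) * (p^e*(p-1)) + c
    have halign : (e + 1 - 1) * (p ^ e * (p - 1)) = e * (p - 1) * p ^ e := by
      have : e + 1 - 1 = e := by omega
      rw [this]; ring
    rw [halign] at hsum
    -- parity of M
    obtain ⟨t, ht2⟩ := hodd.pow (n := e)
    have hqt : p ^ e = 2 * t + 1 := by omega
    have hMexp : p ^ e * M = 2 * (t * M) + M := by rw [hqt]; ring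
    have hparM : 2 ∣ M + c := by omega
    -- main bound : q * S ≤ 2N + c = q * M
    have hqS : p ^ e * (∑ i ∈ Icc 1 e, (c / p ^ (e - i) % p)) ≤ p ^ e * M := by
      by_contra hcon
      push_neg at hcon
      have hMS : M < ∑ i ∈ Icc 1 e, (c / p ^ (e - i) % p) :=
        Nat.lt_of_mul_lt_mul_left hcon
      have hMS2 : M + 2 ≤ ∑ i ∈ Icc 1 e, (c / p ^ (e - i) % p) := by omega
      have h8 := Nat.mul_le_mul_left (p ^ e) hMS2
      have h9 : p ^ e * (M + 2) = p ^ e * M + 2 * p ^ e := by ring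
      omega
    have hSM : (∑ i ∈ Icc 1 e, (c / p ^ (e - i) % p)) ≤ M :=
      Nat.le_of_mul_le_mul_left hqS hq0
    obtain ⟨h, hh⟩ : ∃ h, M = (∑ i ∈ Icc 1 e, (c / p ^ (e - i) % p)) + 2 * h :=
      ⟨(M - ∑ i ∈ Icc 1 e, (c / p ^ (e - i) % p)) / 2, by omega⟩
    refine ⟨h, fun i => c / p ^ (e - i) % p, ?_⟩
    show 2 * N = 2 * h * p ^ e
        + ∑ i ∈ Icc 1 e, (p ^ e - p ^ (e - i)) * (c / p ^ (e - i) % p)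
    -- V + c = q * S
    have hV : (∑ i ∈ Icc 1 e, (p ^ e - p ^ (e - i)) * (c / p ^ (e - i) % p)) + c
        = p ^ e * (∑ i ∈ Icc 1 e, (c / p ^ (e - i) % p)) := by
      have h1 : ∀ i ∈ Icc 1 e,
          (p ^ e - p ^ (e - i)) * (c / p ^ (e - i) % p)
            + p ^ (e - i) * (c / p ^ (e - i) % p)
          = p ^ e * (c / p ^ (e - i) % p) := by
        intro i hi
        have hple : p ^ (e - i) ≤ p ^ e := Nat.pow_le_pow_right (by omega) (by omega)
        rw [← Nat.add_mul, Nat.sub_add_cancel hple]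
      have h2 := Finset.sum_congr rfl h1
      rw [Finset.sum_add_distrib, hT, ← Finset.mul_sum] at h2
      exact h2
    have hMexp2 : p ^ e * M
        = p ^ e * (∑ i ∈ Icc 1 e, (c / p ^ (e - i) % p)) + 2 * h * p ^ e := by
      rw [hh]; ring
    omega
  · -- lower bound
    intro σ' hσ'
    
    by_contra hcon
    push_neg at hcon
    obtain ⟨h, x, hx⟩ := hσ' ((e * (p - 1) * p ^ e - 3 * (p ^ e - 1)) / 2 - 1) (by omega)
    have hV : (∑ i ∈ Icc 1 e, (p ^ e - p ^ (e - i)) * x i)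
          + (∑ i ∈ Icc 1 e, p ^ (e - i) * x i)
        = p ^ e * (∑ i ∈ Icc 1 e, x i) := by
      rw [← Finset.sum_add_distrib, Finset.mul_sum]
      refine Finset.sum_congr rfl ?_
      intro i hi
      have hple : p ^ (e - i) ≤ p ^ e := Nat.pow_le_pow_right (by omega) (by omega)
      rw [← Nat.add_mul, Nat.sub_add_cancel hple]
    have hexp : p ^ e * (2 * h + (∑ i ∈ Icc 1 e, x i) + 3)
        = 2 * h * p ^ e + p ^ e * (∑ i ∈ Icc 1 e, x i) + 3 * p ^ e := by ring
    have hkey : e * (p - 1) * p ^ e + ((∑ i ∈ Icc 1 e, p ^ (e - i) * x i) + 1)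
        = p ^ e * (2 * h + (∑ i ∈ Icc 1 e, x i) + 3) := by omega
    have halign2 : p ^ e * (e * (p - 1)) = e * (p - 1) * p ^ e := by ring
    have hle : e * (p - 1) ≤ 2 * h + (∑ i ∈ Icc 1 e, x i) + 3 := by
      refine Nat.le_of_mul_le_mul_left ?_ hq0
      omega
    obtain ⟨m, hm⟩ := Nat.exists_eq_add_of_le hle
    have hexp2 : p ^ e * (e * (p - 1) + m) = p ^ e * (e * (p - 1)) + p ^ e * m := by ring
    have hTm : (∑ i ∈ Icc 1 e, p ^ (e - i) * x i) + 1 = p ^ e * m := by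
      rw [hm] at hkey
      omega
    have hkm := key_min p (by omega) e x 0 m (by omega)
    omega
end

section
/- Let G be a finite p-group of maximal class with G_1 abelian, of order p^n ≥ p^4. Then for every a ∈ G_1 \ Z(G), the centralizer C_G(a) equals G_1; consequently G_1 \ Z(G) forms a single z-class of G. -/
/-!
Along the lower central series `G = γ₁ > γ₂ > ⋯ > γₙ = 1` every inclusion is proper (the series
would otherwise stabilise before reaching `1`), each factor of a `p`-group has order at least `p`,
and `G/γ₂` is not cyclic (else `G/γ₃` would be abelian). As `|G| = pⁿ`, this forces
`|G : γ₂| = p²` and `|γᵢ : γᵢ₊₁| = p` for `i ≥ 2`. Fix `s ∈ γ₂ \ γ₃`. Then `g ↦ [s, g] γ₄` is a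
homomorphism from `G` to `γ₃/γ₄`, of order `p`, and its kernel is `G₁` because `γ₂ = ⟨s⟩γ₃`;
since `G₁ ≠ G`, `|G : G₁| = p`. For `a ∈ G₁ \ Z(G)`, the abelian group `G₁` lies in the proper
subgroup `C_G(a)`, hence `C_G(a) = G₁`, and all these centralizers coincide.
-/

open scoped commutatorElement

theorem Nat.mul_pow_dvd_of_forall_mul_dvd_succ {f : ℕ → ℕ} {p i j : ℕ}
    (h : ∀ k, i ≤ k → k < j → f k * p ∣ f (k + 1)) (hij : i ≤ j) :
    f i * p ^ (j - i) ∣ f j := by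
  induction j, hij using Nat.le_induction with
  | base => simp
  | succ j hij ih =>
    rw [Nat.sub_add_comm hij, pow_succ, ← mul_assoc]
    exact (Nat.mul_dvd_mul_right (ih fun k hik hkj => h k hik (by omega)) p).trans
      (h j hij (by omega))

theorem IsPGroup.prime_dvd_relIndex {G : Type*} [Group G] [Finite G] {p : ℕ} [Fact p.Prime]
    (hG : IsPGroup p G) {H K : Subgroup G} (hHK : H < K) : p ∣ H.relIndex K := by
  obtain ⟨e, he⟩ := (hG.to_subgroup K).index (H.subgroupOf K)
  rcases e with _ | e
  · exact absurd (Subgroup.relIndex_eq_one.mp he) hHK.not_ge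
  · exact (congrArg (p ∣ ·) he).mpr (dvd_pow_self p e.succ_ne_zero)

-- `γ k` is Mathlib's `lowerCentralSeries`, i.e. `γ_{k+1}` in the usual numbering.
local notation "γ" => Subgroup.lowerCentralSeries (⊤ : Subgroup _)

namespace Subgroup

variable {G : Type*} [Group G]

theorem lowerCentralSeries_eq_of_succ_eq (S : Subgroup G) {i j : ℕ}
    (h : S.lowerCentralSeries i = S.lowerCentralSeries (i + 1)) (hij : i ≤ j) :
    S.lowerCentralSeries j = S.lowerCentralSeries i := by
  induction j, hij using Nat.le_induction with
  | base => rfl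
  | succ j _ ih => rw [lowerCentralSeries_succ, ih, ← lowerCentralSeries_succ, ← h]

theorem eq_or_eq_of_le_of_relIndex_prime {H K L : Subgroup G} (hHK : H ≤ K) (hKL : K ≤ L)
    (hp : (H.relIndex L).Prime) : K = H ∨ K = L := by
  rw [← relIndex_mul_relIndex H K L hHK hKL, Nat.prime_mul_iff] at hp
  rcases hp with ⟨-, h⟩ | ⟨-, h⟩
  · exact Or.inr (le_antisymm hKL (relIndex_eq_one.mp h))
  · exact Or.inl (le_antisymm (relIndex_eq_one.mp h) hHK)

theorem commutatorElement_mem_iff_commute {N : Subgroup G} [N.Normal] {g x : G} :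
    ⁅g, x⁆ ∈ N ↔ Commute (g : G ⧸ N) x := by
  rw [← QuotientGroup.eq_one_iff, ← commutatorElement_eq_one_iff_commute]
  exact Iff.of_eq (congrArg (· = 1) (map_commutatorElement (QuotientGroup.mk' N) g x))

theorem commutator_le_of_isCyclic_quotient {M N : Subgroup G} [M.Normal] [N.Normal]
    (hNM : N ≤ M) (hMN : ⁅M, ⊤⁆ ≤ N) [IsCyclic (G ⧸ M)] : _root_.commutator G ≤ N := by
  let φ : G ⧸ N →* G ⧸ M := QuotientGroup.map N M (MonoidHom.id G) hNM
  have hker : φ.ker ≤ center (G ⧸ N) := by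
    rintro ⟨x⟩ hx
    replace hx : x ∈ M := (QuotientGroup.eq_one_iff x).mp hx
    refine mem_center_iff.mpr ?_
    rintro ⟨y⟩
    exact (commutatorElement_mem_iff_commute.mp
      (hMN ((commutator_comm ⊤ M).le (commutator_mem_commutator (mem_top y) hx)))).eq
  exact Normal.quotient_commutative_iff_commutator_le.mp
    (φ.isMulCommutative_of_isCyclic_of_ker_le_center hker)

theorem index_dvd_relIndex_of_commutator_le {A B C H : Subgroup G} [C.Normal]
    (hAB : ⁅A, ⊤⁆ ≤ B) (hBC : ⁅B, ⊤⁆ ≤ C) (hBA : B ≤ A) (hp : (B.relIndex A).Prime)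
    (hH : ∀ g, g ∈ H ↔ ∀ x ∈ A, ⁅g, x⁆ ∈ C) : H.index ∣ C.relIndex B := by
  obtain ⟨s, hsA, hsB⟩ := SetLike.not_le_iff_exists.mp (mt relIndex_eq_one.mpr hp.ne_one)
  have hcomm : ∀ g, ⁅s, g⁆ ∈ B := fun g => hAB (commutator_mem_commutator hsA (mem_top g))
  have hBC' : ∀ g, ∀ b ∈ B, ⁅g, b⁆ ∈ C := fun g b hb =>
    hBC ((commutator_comm ⊤ B).le (commutator_mem_commutator (mem_top g) hb))
  -- `⁅s, a * b⁆ = ⁅s, a⁆ * a ⁅s, b⁆ a⁻¹`, and conjugation is trivial on `B ⧸ C` as `⁅B, ⊤⁆ ≤ C`.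
  let φ : G →* B ⧸ C.subgroupOf B :=
    MonoidHom.mk' (fun g => ((⟨⁅s, g⁆, hcomm g⟩ : B) : B ⧸ C.subgroupOf B)) fun a b => by
      rw [← QuotientGroup.mk_mul, QuotientGroup.eq, mem_subgroupOf]
      show ⁅s, a * b⁆⁻¹ * (⁅s, a⁆ * ⁅s, b⁆) ∈ C
      have : ⁅s, a * b⁆⁻¹ * (⁅s, a⁆ * ⁅s, b⁆) = ⁅a, ⁅s, b⁆⁻¹⁆ := by
        simp only [commutatorElement_def]; group
      exact this ▸ hBC' a _ (inv_mem (hcomm b))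
  have hker : φ.ker = H := by
    ext g
    rw [MonoidHom.mem_ker, hH]
    refine ((QuotientGroup.eq_one_iff _).trans mem_subgroupOf).trans ⟨fun hg => ?_, fun hg => ?_⟩
    · let D := (centralizer {(g : G ⧸ C)}).comap (QuotientGroup.mk' C)
      have hD : ∀ x, x ∈ D ↔ ⁅g, x⁆ ∈ C := fun x =>
        mem_centralizer_singleton_iff.trans (commutatorElement_mem_iff_commute.trans eq_comm).symm
      have hsD : s ∈ D ⊓ A := ⟨(hD s).mpr (commutatorElement_inv s g ▸ inv_mem hg), hsA⟩
      have hBD : B ≤ D ⊓ A := fun b hb => ⟨(hD b).mpr (hBC' g b hb), hBA hb⟩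
      rcases eq_or_eq_of_le_of_relIndex_prime hBD inf_le_right hp with h | h
      · exact (hsB (h.le hsD)).elim
      · exact fun x hx => (hD x).mp (h.ge hx).1
    · simpa only [commutatorElement_inv] using inv_mem (hg s hsA)
  rw [← hker, index_ker]
  exact card_subgroup_dvd_card φ.range

theorem index_lowerCentralSeries_of_maximalClass [Finite G] {p n : ℕ} [Fact p.Prime]
    (hn : 3 ≤ n) (hcard : Nat.card G = p ^ n) (hmax₁ : (γ (n - 1) : Subgroup G) = ⊥)
    (hmax₂ : (γ (n - 2) : Subgroup G) ≠ ⊥) {k : ℕ} (hk₁ : 1 ≤ k) (hk : k ≤ n - 1) :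
    (γ k : Subgroup G).index = p ^ (k + 1) := by
  have hpG : IsPGroup p G := IsPGroup.of_card hcard
  have hlt : ∀ i, i ≤ n - 2 → (γ (i + 1) : Subgroup G) < γ i := fun i hi =>
    (lowerCentralSeries_antitone ⊤ (Nat.le_add_right i 1)).lt_of_ne fun h => hmax₂ <| by
      rw [lowerCentralSeries_eq_of_succ_eq ⊤ h.symm (by omega : i ≤ n - 2),
        ← lowerCentralSeries_eq_of_succ_eq ⊤ h.symm (by omega : i ≤ n - 1), hmax₁]
  have hstep : ∀ i, i < n - 1 → (γ i : Subgroup G).index * p ∣ (γ (i + 1)).index := fun i hi => by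
    rw [← relIndex_mul_index (hlt i (by omega)).le, mul_comm]
    exact mul_dvd_mul_right (hpG.prime_dvd_relIndex (hlt i (by omega))) _
  have hγ₁ : p ^ 2 ∣ (γ 1 : Subgroup G).index := by
    obtain ⟨e, he⟩ := hpG.index (γ 1)
    rw [he]
    refine Nat.pow_dvd_pow p (not_lt.mp fun he2 => (hlt 1 (by omega)).not_ge ?_)
    have : IsCyclic (G ⧸ (γ 1 : Subgroup G)) := isCyclic_of_card_dvd_prime (p := p) <| by
      rw [← index_eq_card, he]
      exact pow_dvd_pow p (by omega : e ≤ 1) |>.trans (pow_one p).dvd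
    rw [top_lowerCentralSeries_one]
    exact commutator_le_of_isCyclic_quotient (lowerCentralSeries_antitone ⊤ one_le_two) le_rfl
  have hup : (γ k : Subgroup G).index * p ^ (n - 1 - k) ∣ p ^ (k + 1) * p ^ (n - 1 - k) := by
    rw [← pow_add, show k + 1 + (n - 1 - k) = n by omega, ← hcard, ← index_bot, ← hmax₁]
    exact Nat.mul_pow_dvd_of_forall_mul_dvd_succ (fun i _ hi => hstep i hi) hk
  have hlow : p ^ 2 * p ^ (k - 1) ∣ (γ k : Subgroup G).index :=
    (mul_dvd_mul_right hγ₁ _).trans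
      (Nat.mul_pow_dvd_of_forall_mul_dvd_succ (fun i _ hi => hstep i (by omega)) hk₁)
  rw [← pow_add, show 2 + (k - 1) = k + 1 by omega] at hlow
  exact Nat.dvd_antisymm (Nat.dvd_of_mul_dvd_mul_right (pow_pos (Fact.out : p.Prime).pos _) hup)
    hlow

theorem relIndex_lowerCentralSeries_succ_of_maximalClass [Finite G] {p n : ℕ} [Fact p.Prime]
    (hn : 3 ≤ n) (hcard : Nat.card G = p ^ n) (hmax₁ : (γ (n - 1) : Subgroup G) = ⊥)
    (hmax₂ : (γ (n - 2) : Subgroup G) ≠ ⊥) {k : ℕ} (hk₁ : 1 ≤ k) (hk : k ≤ n - 2) :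
    (γ (k + 1) : Subgroup G).relIndex (γ k) = p := by
  have h := relIndex_mul_index
    (lowerCentralSeries_antitone (⊤ : Subgroup G) (Nat.le_add_right k 1))
  rw [index_lowerCentralSeries_of_maximalClass hn hcard hmax₁ hmax₂ hk₁ (by omega),
    index_lowerCentralSeries_of_maximalClass hn hcard hmax₁ hmax₂ (by omega) (by omega),
    pow_succ p (k + 1), mul_comm _ p] at h
  exact Nat.eq_of_mul_eq_mul_right (pow_pos (Fact.out : p.Prime).pos _) h

end Subgroup

/-- If `G` is a finite `p`-group of maximal class of order `p^n ≥ p^4` whose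
two-step centralizer `G₁ = C_G(G₂/G₄)` is abelian, then for every
`a ∈ G₁ \ Z(G)` the centralizer of `a` is `G₁`; consequently all elements of
`G₁ \ Z(G)` are `z`-equivalent (their centralizers are conjugate). -/
theorem stmt_7 {G : Type*} [Group G] [Finite G] (p n : ℕ) (hp : p.Prime) (hn : 4 ≤ n)
    (hcard : Nat.card G = p ^ n)
    (hmax₁ : (⊤ : Subgroup G).lowerCentralSeries (n - 1) = ⊥)
    (hmax₂ : (⊤ : Subgroup G).lowerCentralSeries (n - 2) ≠ ⊥)
    (G₁ : Subgroup G)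
    (hG₁ : ∀ g : G, g ∈ G₁ ↔ ∀ x ∈ (⊤ : Subgroup G).lowerCentralSeries 1, ⁅g, x⁆ ∈ (⊤ : Subgroup G).lowerCentralSeries 3)
    (habel : ∀ a ∈ G₁, ∀ b ∈ G₁, a * b = b * a) :
    (∀ a : G, a ∈ G₁ → a ∉ Subgroup.center G → Subgroup.centralizer {a} = G₁) ∧
    (∀ a b : G, a ∈ G₁ → a ∉ Subgroup.center G → b ∈ G₁ → b ∉ Subgroup.center G →
      ∃ g : G, (Subgroup.centralizer {a}).map (MulAut.conj g).toMonoidHom =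
        Subgroup.centralizer {b}) := by
  open Subgroup in
  have : Fact p.Prime := ⟨hp⟩
  have hγ₂ : (γ 2 : Subgroup G).relIndex (γ 1) = p :=
    relIndex_lowerCentralSeries_succ_of_maximalClass (by omega) hcard hmax₁ hmax₂ le_rfl (by omega)
  have hγ₃ : (γ 3 : Subgroup G).relIndex (γ 2) = p :=
    relIndex_lowerCentralSeries_succ_of_maximalClass (by omega) hcard hmax₁ hmax₂ one_le_two
      (by omega)
  have hG₁dvd : G₁.index ∣ p := hγ₃ ▸ index_dvd_relIndex_of_commutator_le le_rfl le_rfl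
    (Subgroup.lowerCentralSeries_antitone ⊤ one_le_two) (hγ₂ ▸ hp) hG₁
  have hG₁ne : G₁ ≠ ⊤ := by
    rintro rfl
    refine hp.ne_one (hγ₃ ▸ relIndex_eq_one.mpr ?_)
    rw [Subgroup.lowerCentralSeries_succ, commutator_le]
    exact fun x hx g _ => by
      simpa only [commutatorElement_inv] using inv_mem ((hG₁ g).mp (mem_top g) x hx)
  have hG₁index : G₁.index = p :=
    (hp.eq_one_or_self_of_dvd _ hG₁dvd).resolve_left (mt index_eq_one.mp hG₁ne)
  have hcent : ∀ a, a ∈ G₁ → a ∉ center G → centralizer {a} = G₁ := by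
    intro a ha hz
    have hle : G₁ ≤ centralizer {a} := fun x hx =>
      mem_centralizer_singleton_iff.mpr (habel x hx a ha)
    refine (eq_or_eq_of_le_of_relIndex_prime hle le_top ?_).resolve_right
      fun htop => hz (centralizer_eq_top_iff_subset.mp htop rfl)
    rwa [relIndex_top_right, hG₁index]
  exact ⟨hcent, fun a b ha hza hb hzb => ⟨1, by rw [hcent a ha hza, hcent b hb hzb]; ext; simp⟩⟩
end

section
/- Let G be a p-group of maximal class of order p^n with p+2 ≤ n ≤ 2p-1, p ≥ 5, and suppose G is p²-exceptional (exactly one z-class of uniform elements has elements of order p², the rest order p). Then G is of (p,p,p)-type: there exist x, y ∈ G with |x| = |y| = |xy| = p and G = ⟨x, y⟩. -/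
/-!
The commutator subgroup `G'` lies in `G₁` and has index `p²`, so for a uniform `u` of order `p`
the subgroup `⟨u⟩G'` is maximal; as `G'` lies in the Frattini subgroup, `u` and any `v ∉ ⟨u⟩G'`
generate `G`. Uniform elements of order `p²` have centralizers conjugate to `C_G(w)` for a fixed
such `w`, so each is conjugate to a nontrivial element of the proper subgroup `C_G(w)`; since
`C_G(w)` is properly contained in its normalizer, there are fewer than `|G|/p` of them. For
`p ≥ 5` these counts leave some `v ∉ ⟨u⟩G'` with both `v` and `uv` uniform of order `p`.
-/

open scoped Pointwise commutatorElement

section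

variable {G : Type*} [Group G]

namespace Subgroup

theorem lowerCentralSeries_eq_bot_of_succ_eq [Group.IsNilpotent G] {i : ℕ}
    (h : (⊤ : Subgroup G).lowerCentralSeries (i + 1) = (⊤ : Subgroup G).lowerCentralSeries i) :
    (⊤ : Subgroup G).lowerCentralSeries i = ⊥ := by
  have hstable : ∀ k, (⊤ : Subgroup G).lowerCentralSeries (i + k) =
      (⊤ : Subgroup G).lowerCentralSeries i := by
    intro k
    induction k with
    | zero => rfl
    | succ k ih => rw [← add_assoc, lowerCentralSeries_succ, ih, ← lowerCentralSeries_succ, h]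
  obtain ⟨m, hm⟩ := nilpotent_iff_lowerCentralSeries.mp ‹Group.IsNilpotent G›
  rw [← hstable m, eq_bot_iff, ← hm]
  exact lowerCentralSeries_antitone _ (Nat.le_add_left m i)

theorem lowerCentralSeries_succ_lt [Group.IsNilpotent G] {i : ℕ}
    (h : (⊤ : Subgroup G).lowerCentralSeries i ≠ ⊥) :
    (⊤ : Subgroup G).lowerCentralSeries (i + 1) < (⊤ : Subgroup G).lowerCentralSeries i :=
  (lowerCentralSeries_antitone _ i.le_succ).lt_of_ne (mt lowerCentralSeries_eq_bot_of_succ_eq h)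

theorem commutator_lowerCentralSeries_one_le_three :
    ⁅(⊤ : Subgroup G).lowerCentralSeries 1, (⊤ : Subgroup G).lowerCentralSeries 1⁆ ≤
      (⊤ : Subgroup G).lowerCentralSeries 3 := by
  set N := (⊤ : Subgroup G).lowerCentralSeries 3
  have hmap : ∀ i, ((⊤ : Subgroup G).lowerCentralSeries i).map (QuotientGroup.mk' N) =
      (⊤ : Subgroup (G ⧸ N)).lowerCentralSeries i := by
    intro i
    rw [map_lowerCentralSeries, map_top_of_surjective _ (QuotientGroup.mk'_surjective N)]
  -- three subgroups lemma in `G ⧸ γ₄`, where `⁅⁅⊤, γ₂⁆, ⊤⁆ = ⁅⁅γ₂, ⊤⁆, ⊤⁆ = γ₄ = ⊥`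
  have hbot : (⊤ : Subgroup (G ⧸ N)).lowerCentralSeries 3 = ⊥ := by
    rw [← hmap, map_eq_bot_iff, QuotientGroup.ker_mk']
  have hrot : ⁅⁅(⊤ : Subgroup (G ⧸ N)), (⊤ : Subgroup (G ⧸ N)).lowerCentralSeries 1⁆,
      (⊤ : Subgroup (G ⧸ N))⁆ = ⊥ := by
    rwa [commutator_comm (⊤ : Subgroup (G ⧸ N))]
  have hQ : ⁅(⊤ : Subgroup (G ⧸ N)).lowerCentralSeries 1,
      (⊤ : Subgroup (G ⧸ N)).lowerCentralSeries 1⁆ = ⊥ :=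
    commutator_commutator_eq_bot_of_rotate hrot hbot
  rw [← QuotientGroup.ker_mk' N, ← map_eq_bot_iff, map_commutator, hmap, hQ]

def nontrivialConjugates (H : Subgroup G) : Set G :=
  {x | ∃ g : G, ∃ h ∈ H, h ≠ 1 ∧ g * h * g⁻¹ = x}

theorem mem_nontrivialConjugates_of_map_conj_eq {H K : Subgroup G} {g v : G}
    (hHK : H.map (MulAut.conj g).toMonoidHom = K) (hv : v ∈ K) (hv1 : v ≠ 1) :
    v ∈ H.nontrivialConjugates := by
  obtain ⟨h, hh, rfl⟩ := hHK ▸ hv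
  exact ⟨g, h, hh, fun h1 => hv1 (by simp [h1]), rfl⟩

theorem ncard_nontrivialConjugates_le [Finite G] (H : Subgroup G) :
    H.nontrivialConjugates.ncard ≤ (normalizer (H : Set G)).index * (Nat.card H - 1) := by
  set N := normalizer (H : Set G)
  -- a conjugate `g h g⁻¹` is also a conjugate by the chosen representative of the coset `g N`
  have hcover : H.nontrivialConjugates ⊆
      (fun qh : (G ⧸ N) × G => qh.1.out * qh.2 * qh.1.out⁻¹) ''
        (Set.univ ×ˢ ((H : Set G) \ {1})) := by
    rintro _ ⟨g, h, hh, h1, rfl⟩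
    obtain ⟨n, hn⟩ := QuotientGroup.mk_out_eq_mul N g
    refine ⟨((g : G ⧸ N), (n : G)⁻¹ * h * n), ⟨trivial, ?_, ?_⟩, ?_⟩
    · simpa using (mem_normalizer_iff.mp (inv_mem n.2) h).mp hh
    · exact fun h' => h1 (by
        rwa [Set.mem_singleton_iff, mul_assoc, inv_mul_eq_one, right_eq_mul] at h')
    · simp only [hn]
      group
  calc H.nontrivialConjugates.ncard
      ≤ (Set.univ ×ˢ ((H : Set G) \ {1}) : Set ((G ⧸ N) × G)).ncard :=
        (Set.ncard_le_ncard hcover).trans Set.ncard_image_le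
    _ = N.index * (Nat.card H - 1) := by
        rw [Set.ncard_prod, Set.ncard_univ, Set.ncard_sdiff_singleton_of_mem H.one_mem,
          ← Nat.card_coe_set_eq]
        rfl

end Subgroup

open Subgroup

theorem commutator_le_of_isCoatom {M : Subgroup G} [M.Normal] (hM : IsCoatom M) :
    commutator G ≤ M := by
  obtain ⟨g, hg⟩ : ∃ g, g ∉ M := SetLike.exists_not_mem_of_ne_top M hM.1 rfl
  refine Normal.commutator_le_of_self_sup_commutative_eq_top
    (hM.2 _ (lt_of_le_of_ne le_sup_left fun h => hg ?_)) (H := zpowers g) inferInstance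
  exact h ▸ mem_sup_right (mem_zpowers g)

theorem commutator_le_frattini [Group.IsNilpotent G] : commutator G ≤ frattini G :=
  le_iInf₂ fun M hM =>
    have := Group.normalizerCondition_of_isNilpotent.normal_of_coatom M hM
    commutator_le_of_isCoatom hM

theorem zpowers_sup_commutator_ne_top [Finite G] [Group.IsNilpotent G] (h : commutator G ≠ ⊥)
    (u : G) : zpowers u ⊔ commutator G ≠ ⊤ := by
  intro htop
  have : IsCyclic G := isCyclic_iff_exists_zpowers_eq_top.mpr
    ⟨u, frattini_nongenerating (top_le_iff.mp (htop ▸ sup_le_sup_left commutator_le_frattini _))⟩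
  exact h ((commutator_eq_bot_iff G).mpr IsCyclic.isMulCommutative)

theorem closure_pair_eq_top_of_isCoatom [Finite G] [Group.IsNilpotent G] {u v : G}
    (hU : IsCoatom (zpowers u ⊔ commutator G)) (hv : v ∉ zpowers u ⊔ commutator G) :
    closure {u, v} = ⊤ := by
  refine frattini_nongenerating (top_le_iff.mp ?_)
  have hlt : zpowers u ⊔ commutator G < closure {u, v} ⊔ commutator G := by
    refine lt_of_le_of_ne (sup_le_sup_right ?_ _)
      fun h => hv (h ▸ mem_sup_left (subset_closure (Set.mem_insert_of_mem u rfl)))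
    exact zpowers_le.mpr (subset_closure (Set.mem_insert u _))
  calc ⊤ = closure {u, v} ⊔ commutator G := (hU.2 _ hlt).symm
    _ ≤ closure {u, v} ⊔ frattini G := sup_le_sup_left commutator_le_frattini _

theorem exists_notMem_and_mul_notMem_of_ncard_add_lt [Finite G] {U T : Set G} (u : G)
    (h : U.ncard + 2 * T.ncard < Nat.card G) : ∃ v, v ∉ U ∧ v ∉ T ∧ u * v ∉ T := by
  by_contra! hall
  have hcover : Set.univ ⊆ U ∪ T ∪ u⁻¹ • T := fun v _ => by
    by_cases hvU : v ∈ U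
    · exact Or.inl (Or.inl hvU)
    by_cases hvT : v ∈ T
    · exact Or.inl (Or.inr hvT)
    exact Or.inr (Set.mem_smul_set_iff_inv_smul_mem.mpr (by simpa using hall v hvU hvT))
  have := (Set.ncard_le_ncard hcover).trans
    ((Set.ncard_union_le _ _).trans (Nat.add_le_add_right (Set.ncard_union_le _ _) _))
  rw [Set.ncard_univ, Set.ncard_smul_set] at this
  omega

namespace IsPGroup

variable {p : ℕ} [Fact p.Prime] [Finite G] (hG : IsPGroup p G)
include hG

theorem mul_card_le_card_of_lt {H K : Subgroup G} (h : H < K) : p * Nat.card H ≤ Nat.card K := by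
  have hmul : Nat.card H * H.relIndex K = Nat.card K := by
    rw [← relIndex_bot_left, ← relIndex_bot_left, relIndex_mul_relIndex _ _ _ bot_le h.le]
  obtain ⟨m, hm⟩ := (hG.to_subgroup K).index (H.subgroupOf K)
  have hm0 : m ≠ 0 := by
    rintro rfl
    exact h.not_ge (relIndex_eq_one.mp hm)
  calc p * Nat.card H ≤ p ^ m * Nat.card H := Nat.mul_le_mul_right _ (Nat.le_self_pow hm0 p)
    _ = Nat.card K := by rw [← hmul, mul_comm, ← hm]; rfl

theorem mul_card_le_card_of_ne_top {H : Subgroup G} (h : H ≠ ⊤) : p * Nat.card H ≤ Nat.card G :=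
  card_top (G := G) ▸ hG.mul_card_le_card_of_lt h.lt_top

theorem pow_mul_card_le_card_of_strictAnti {H : ℕ → Subgroup G} {k : ℕ}
    (hH : ∀ i < k, H (i + 1) < H i) : p ^ k * Nat.card (H k) ≤ Nat.card (H 0) := by
  induction k with
  | zero => simp
  | succ k ih =>
    calc p ^ (k + 1) * Nat.card (H (k + 1)) = p ^ k * (p * Nat.card (H (k + 1))) := by ring
      _ ≤ p ^ k * Nat.card (H k) :=
          Nat.mul_le_mul_left _ (hG.mul_card_le_card_of_lt (hH k k.lt_succ_self))
      _ ≤ Nat.card (H 0) := ih fun i hi => hH i (hi.trans k.lt_succ_self)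

theorem pow_le_card_commutator {c : ℕ} (hc : (⊤ : Subgroup G).lowerCentralSeries (c + 1) ≠ ⊥) :
    p ^ (c + 1) ≤ Nat.card (commutator G) := by
  have := hG.isNilpotent
  have hchain := hG.pow_mul_card_le_card_of_strictAnti
    (H := fun i => (⊤ : Subgroup G).lowerCentralSeries (i + 1)) (k := c + 1) fun i hi =>
      lowerCentralSeries_succ_lt fun h =>
        hc (eq_bot_iff.mpr (h ▸ (⊤ : Subgroup G).lowerCentralSeries_antitone (by omega)))
  exact le_of_mul_le_of_one_le_left hchain Nat.card_pos

theorem isCoatom_of_card_le_mul {H : Subgroup G} (hne : H ≠ ⊤)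
    (hcard : Nat.card G ≤ p * Nat.card H) : IsCoatom H :=
  ⟨hne, fun K hK => K.eq_top_of_card_eq
    (le_antisymm (card_le_card_group K) (hcard.trans (hG.mul_card_le_card_of_lt hK)))⟩

theorem isCoatom_zpowers_sup_commutator {n : ℕ} (hcard : Nat.card G = p ^ n) (hn : 3 ≤ n)
    (hmax : (⊤ : Subgroup G).lowerCentralSeries (n - 2) ≠ ⊥) {u : G} (hu : u ∉ commutator G) :
    IsCoatom (zpowers u ⊔ commutator G) := by
  have := hG.isNilpotent
  have hn2 : n - 2 = n - 3 + 1 := by omega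
  have hG' : p ^ (n - 2) ≤ Nat.card (commutator G) :=
    hn2 ▸ hG.pow_le_card_commutator (hn2 ▸ hmax)
  have hne : commutator G ≠ ⊥ := fun h =>
    hmax (eq_bot_iff.mpr (h ▸ (⊤ : Subgroup G).lowerCentralSeries_antitone (by omega : 1 ≤ n - 2)))
  have hlt : commutator G < zpowers u ⊔ commutator G :=
    lt_of_le_of_ne le_sup_right fun h => hu (h ▸ mem_sup_left (mem_zpowers u))
  refine hG.isCoatom_of_card_le_mul (zpowers_sup_commutator_ne_top hne u) ?_
  calc Nat.card G = p * (p * p ^ (n - 2)) := by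
        rw [hcard, ← pow_succ', ← pow_succ']
        congr 1
        omega
    _ ≤ p * (p * Nat.card (commutator G)) := by gcongr
    _ ≤ p * Nat.card ↥(zpowers u ⊔ commutator G) := by
        gcongr
        exact hG.mul_card_le_card_of_lt hlt

theorem mul_ncard_nontrivialConjugates_lt {H : Subgroup G} (hH : H ≠ ⊤) :
    p * H.nontrivialConjugates.ncard < Nat.card G := by
  have := hG.isNilpotent
  set N := normalizer (H : Set G)
  have hHN : H < N := Group.normalizerCondition_of_isNilpotent H hH.lt_top
  calc p * H.nontrivialConjugates.ncard ≤ p * (N.index * (Nat.card H - 1)) :=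
        Nat.mul_le_mul_left _ H.ncard_nontrivialConjugates_le
    _ < p * (N.index * Nat.card H) := by
        have : 0 < N.index := Nat.pos_of_ne_zero index_ne_zero_of_finite
        have : 0 < Nat.card H := Nat.card_pos
        have : 0 < p := (Fact.out : p.Prime).pos
        gcongr
        omega
    _ = N.index * (p * Nat.card H) := by ring
    _ ≤ N.index * Nat.card N := Nat.mul_le_mul_left _ (hG.mul_card_le_card_of_lt hHN)
    _ = Nat.card G := N.index_mul_card

theorem exists_notMem_and_mul_notMem (hp5 : 5 ≤ p) {U A : Subgroup G} (hU : U ≠ ⊤)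
    (hA : A ≠ ⊤) {S : Set G} (hS : p * S.ncard < Nat.card G) (u : G) :
    ∃ v, v ∉ U ∧ v ∉ (A : Set G) ∪ S ∧ u * v ∉ (A : Set G) ∪ S := by
  refine exists_notMem_and_mul_notMem_of_ncard_add_lt u ?_
  have hUle := hG.mul_card_le_card_of_ne_top hU
  have hAle := hG.mul_card_le_card_of_ne_top hA
  have hunion : ((A : Set G) ∪ S).ncard ≤ Nat.card A + S.ncard :=
    (Set.ncard_union_le _ _).trans_eq (by rw [← Nat.card_coe_set_eq]; rfl)
  rw [← Nat.card_coe_set_eq]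
  by_contra! h
  nlinarith

end IsPGroup

end

theorem stmt_15_general {G : Type*} [Group G] [Finite G] (p n : ℕ) (hp : p.Prime)
    (hp5 : 5 ≤ p) (hn₁ : p + 2 ≤ n)
    (hcard : Nat.card G = p ^ n)
    (hmax₂ : (⊤ : Subgroup G).lowerCentralSeries (n - 2) ≠ ⊥)
    (G₁ : Subgroup G)
    (hG₁ : ∀ g : G, g ∈ G₁ ↔ ∀ x ∈ (⊤ : Subgroup G).lowerCentralSeries 1, ⁅g, x⁆ ∈ (⊤ : Subgroup G).lowerCentralSeries 3)
    (horders : ∀ u : G, u ∉ G₁ → orderOf u = p ∨ orderOf u = p ^ 2)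
    (hex1 : ∃ u : G, u ∉ G₁ ∧ orderOf u = p)
    (hex2 : ∃ u : G, u ∉ G₁ ∧ orderOf u = p ^ 2)
    (hexc : ∀ u : G, u ∉ G₁ → ∀ v : G, v ∉ G₁ →
      orderOf u = p ^ 2 → orderOf v = p ^ 2 →
      ∃ g : G, (Subgroup.centralizer {u}).map (MulAut.conj g).toMonoidHom =
        Subgroup.centralizer {v}) :
    ∃ x y : G, orderOf x = p ∧ orderOf y = p ∧ orderOf (x * y) = p ∧
      Subgroup.closure {x, y} = ⊤ := by
  have : Fact p.Prime := ⟨hp⟩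
  have hG : IsPGroup p G := IsPGroup.of_card hcard
  have := hG.isNilpotent
  obtain ⟨u, huG₁, hu⟩ := hex1
  obtain ⟨w, hwG₁, hw⟩ := hex2
  have hG'G₁ : commutator G ≤ G₁ := fun g hg => (hG₁ g).mpr fun x hx =>
    Subgroup.commutator_lowerCentralSeries_one_le_three (Subgroup.commutator_mem_commutator hg hx)
  have hU := hG.isCoatom_zpowers_sup_commutator hcard (by omega) hmax₂ fun h => huG₁ (hG'G₁ h)
  have hC : Subgroup.centralizer {w} ≠ ⊤ := by
    intro h
    refine hwG₁ ((hG₁ w).mpr fun x _ => ?_)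
    have hwx : Commute w x :=
      (Subgroup.mem_centralizer_singleton_iff.mp (h ▸ Subgroup.mem_top x)).symm
    rw [commutatorElement_eq_one_iff_commute.mpr hwx]
    exact one_mem _
  have horder : ∀ v ∉ (G₁ : Set G) ∪ (Subgroup.centralizer {w}).nontrivialConjugates,
      orderOf v = p := by
    intro v hv
    refine (horders v fun h => hv (Or.inl h)).resolve_right fun hv2 => hv (Or.inr ?_)
    obtain ⟨g, hg⟩ := hexc w hwG₁ v (fun h => hv (Or.inl h)) hw hv2
    exact Subgroup.mem_nontrivialConjugates_of_map_conj_eq hg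
      (Subgroup.mem_centralizer_singleton_iff.mpr rfl) fun h1 => hv (Or.inl (h1 ▸ G₁.one_mem))
  obtain ⟨v, hvU, hv, huv⟩ := hG.exists_notMem_and_mul_notMem hp5 hU.1
    (fun h : G₁ = ⊤ => huG₁ (h ▸ Subgroup.mem_top u)) (hG.mul_ncard_nontrivialConjugates_lt hC) u
  exact ⟨u, v, hu, horder v hv, horder _ huv, closure_pair_eq_top_of_isCoatom hU hvU⟩

/-- Let `p ≥ 5` and `G` a `p`-group of maximal class of order `p^n` with
`p+2 ≤ n ≤ 2p-1`.  If `G` is `p²`-exceptional (the uniform elements `G \ G₁`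
have orders `{p, p²}` and the order-`p²` ones form a single `z`-class), then
`G` is of `(p,p,p)`-type: there exist `x, y` of order `p` with `xy` of order
`p` generating `G`. -/
theorem stmt_15 {G : Type*} [Group G] [Finite G] (p n : ℕ) (hp : p.Prime)
    (hp5 : 5 ≤ p) (hn₁ : p + 2 ≤ n) (hn₂ : n ≤ 2 * p - 1)
    (hcard : Nat.card G = p ^ n)
    (hmax₁ : (⊤ : Subgroup G).lowerCentralSeries (n - 1) = ⊥)
    (hmax₂ : (⊤ : Subgroup G).lowerCentralSeries (n - 2) ≠ ⊥)
    (G₁ : Subgroup G)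
    (hG₁ : ∀ g : G, g ∈ G₁ ↔ ∀ x ∈ (⊤ : Subgroup G).lowerCentralSeries 1, ⁅g, x⁆ ∈ (⊤ : Subgroup G).lowerCentralSeries 3)
    (horders : ∀ u : G, u ∉ G₁ → orderOf u = p ∨ orderOf u = p ^ 2)
    (hex1 : ∃ u : G, u ∉ G₁ ∧ orderOf u = p)
    (hex2 : ∃ u : G, u ∉ G₁ ∧ orderOf u = p ^ 2)
    (hexc : ∀ u : G, u ∉ G₁ → ∀ v : G, v ∉ G₁ →
      orderOf u = p ^ 2 → orderOf v = p ^ 2 →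
      ∃ g : G, (Subgroup.centralizer {u}).map (MulAut.conj g).toMonoidHom =
        Subgroup.centralizer {v}) :
    ∃ x y : G, orderOf x = p ∧ orderOf y = p ∧ orderOf (x * y) = p ∧
      Subgroup.closure {x, y} = ⊤ :=
  stmt_15_general p n hp hp5 hn₁ hcard hmax₂ G₁ hG₁ horders hex1 hex2 hexc
end

section
/- Let p ≥ 5 be prime, e ≥ 3, and write σ_e(p) = (1/2)[e(p-1)p^e - 3(p^e-1)], M_0 = (1/2)e(p-1)p^e - p^e - p^{e-1} + 1. For 1 ≤ k ≤ e-2 let α_k be defined by 2α_k = 1 + (p-1)p^k + (p-1)p^{k+1} + ⋯ + (p-1)p^{e-1} + p^e. Then J'_k := 2(M_0 - α_k) - (p^e - 1) = (e(p-1) - 6)p^e + (p-2)p^{e-1} + p^k + 2, and the digit sum S_e(J'_k) = e(p-1) + p - 5 ≥ e(p-1). -/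
lemma div_small_add (p x y m i : ℕ) (hp : 0 < p) (hx : x < p ^ m) (hmi : m ≤ i) :
    (x + y * p ^ m) / p ^ i = y / p ^ (i - m) := by
  have h1 : (x + y * p ^ m) / p ^ m = y := by
    rw [Nat.add_mul_div_right _ _ (pow_pos hp m), Nat.div_eq_of_lt hx, zero_add]
  rw [show p ^ i = p ^ m * p ^ (i - m) by rw [← pow_add]; congr 1; omega,
    ← Nat.div_div_eq_div_mul, h1]

lemma div_lt_add (p x y m i : ℕ) (hp : 0 < p) (him : i < m) :
    (x + y * p ^ m) / p ^ i % p = x / p ^ i % p := by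
  have hm : y * p ^ m = (y * p ^ (m - i - 1) * p) * p ^ i := by
    rw [mul_assoc, mul_assoc, ← pow_succ', ← pow_add]
    congr 2
    omega
  rw [hm, Nat.add_mul_div_right _ _ (pow_pos hp i), Nat.add_mul_mod_self_right]

lemma fsplit (p x y m n : ℕ) (hp : 0 < p) (hx : x < p ^ m) (hmn : m ≤ n) :
    (∑ i ∈ Finset.range n, (x + y * p ^ m) / p ^ i % p) + (x + y * p ^ m) / p ^ n
      = ((∑ i ∈ Finset.range m, x / p ^ i % p) + x / p ^ m)
        + ((∑ i ∈ Finset.range (n - m), y / p ^ i % p) + y / p ^ (n - m)) := by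
  have h1 : ∑ i ∈ Finset.range n, (x + y * p ^ m) / p ^ i % p
      = (∑ i ∈ Finset.range m, x / p ^ i % p)
        + ∑ i ∈ Finset.Ico m n, y / p ^ (i - m) % p := by
    rw [Finset.range_eq_Ico, ← Finset.sum_Ico_consecutive _ (Nat.zero_le m) hmn,
      ← Finset.range_eq_Ico]
    congr 1
    · exact Finset.sum_congr rfl fun i hi => by
        rw [div_lt_add p x y m i hp (Finset.mem_range.mp hi)]
    · exact Finset.sum_congr rfl fun i hi => by
        rw [div_small_add p x y m i hp hx (Finset.mem_Ico.mp hi).1]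
  have h2 : ∑ i ∈ Finset.Ico m n, y / p ^ (i - m) % p
      = ∑ i ∈ Finset.range (n - m), y / p ^ i % p := by
    rw [Finset.sum_Ico_eq_sum_range]
    exact Finset.sum_congr rfl fun i _ => by rw [Nat.add_sub_cancel_left]
  rw [h1, h2, div_small_add p x y m n hp hx hmn, Nat.div_eq_of_lt hx]
  omega

lemma f_small (p x : ℕ) (hx : x < p) :
    ∀ m, (∑ i ∈ Finset.range m, x / p ^ i % p) + x / p ^ m = x := by
  intro m
  induction m with
  | zero => simp
  | succ m ih =>
    rw [Finset.sum_range_succ]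
    rcases Nat.eq_zero_or_pos m with rfl | hm
    · simp [Nat.mod_eq_of_lt hx, Nat.div_eq_of_lt hx,
        Nat.div_eq_of_lt (show x < p ^ 1 by simpa)]
    · have h1 : x / p ^ m = 0 :=
        Nat.div_eq_of_lt (lt_of_lt_of_le hx (Nat.le_self_pow (by omega) p))
      have h2 : x / p ^ (m + 1) = 0 :=
        Nat.div_eq_of_lt (lt_of_lt_of_le hx (Nat.le_self_pow (by omega) p))
      rw [h1] at ih ⊢
      rw [Nat.zero_mod, h2]
      omega

/-- For `p ≥ 5` prime, `e ≥ 3`, `1 ≤ k ≤ e - 2`, with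
`2M₀ = e(p-1)p^e - 2p^e - 2p^{e-1} + 2` and
`2α_k = 1 + Σ_{i=k}^{e-1} (p-1)p^i + p^e`, the number
`J'_k = 2(M₀ - α_k) - (p^e - 1)` equals `(e(p-1)-6)p^e + (p-2)p^{e-1} + p^k + 2`
and its base-`p` digit sum (truncated at the `e`-th place) is `e(p-1) + p - 5`,
which is at least `e(p-1)`. -/
theorem stmt_16 (p e k : ℕ) (hp : p.Prime) (hp5 : 5 ≤ p) (he : 3 ≤ e)
    (hk : 1 ≤ k) (hke : k ≤ e - 2) :
    let twoM0 : ℤ := e * (p - 1) * p ^ e - 2 * p ^ e - 2 * p ^ (e - 1) + 2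
    let twoα : ℤ := 1 + (∑ i ∈ Finset.Ico k e, ((p : ℤ) - 1) * p ^ i) + p ^ e
    let J : ℤ := twoM0 - twoα - ((p : ℤ) ^ e - 1)
    J = ((e : ℤ) * (p - 1) - 6) * p ^ e + ((p : ℤ) - 2) * p ^ (e - 1) + p ^ k + 2 ∧
    (∑ i ∈ Finset.range e, J.toNat / p ^ i % p) + J.toNat / p ^ e
      = e * (p - 1) + p - 5 ∧
    e * (p - 1) ≤ e * (p - 1) + p - 5 := by
  intro twoM0 twoα J
  obtain ⟨j, hj, rfl⟩ : ∃ j, 1 ≤ j ∧ e = k + j + 1 := ⟨e - k - 1, by omega, by omega⟩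
  have hp0 : 0 < p := by omega
  have hpk : p ≤ p ^ k := Nat.le_self_pow (by omega) p
  have hpj : p ≤ p ^ j := Nat.le_self_pow (by omega) p
  have h6 : 6 ≤ (k + j + 1) * (p - 1) := by
    calc 6 ≤ 3 * 4 := by norm_num
    _ ≤ (k + j + 1) * (p - 1) := Nat.mul_le_mul (by omega) (by omega)
  have hgeo : (∑ i ∈ Finset.Ico k (k + j + 1), ((p : ℤ) - 1) * (p : ℤ) ^ i)
      = (p : ℤ) ^ (k + j + 1) - (p : ℤ) ^ k := by
    have h := geom_sum_Ico_mul (p : ℤ) (show k ≤ k + j + 1 by omega)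
    calc (∑ i ∈ Finset.Ico k (k + j + 1), ((p : ℤ) - 1) * (p : ℤ) ^ i)
        = (∑ i ∈ Finset.Ico k (k + j + 1), (p : ℤ) ^ i) * ((p : ℤ) - 1) := by
          rw [Finset.sum_mul]; exact Finset.sum_congr rfl fun i _ => mul_comm _ _
      _ = (p : ℤ) ^ (k + j + 1) - (p : ℤ) ^ k := h
  have hdd : k + j + 1 - 1 = k + j := by omega
  have hJ : J = (((k : ℤ) + j + 1) * (p - 1) - 6) * (p : ℤ) ^ (k + j + 1)
      + ((p : ℤ) - 2) * (p : ℤ) ^ (k + j) + (p : ℤ) ^ k + 2 := by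
    show twoM0 - twoα - ((p : ℤ) ^ (k + j + 1) - 1) = _
    show ((k + j + 1 : ℕ) : ℤ) * (p - 1) * p ^ (k + j + 1) - 2 * p ^ (k + j + 1)
        - 2 * p ^ (k + j + 1 - 1) + 2
        - (1 + (∑ i ∈ Finset.Ico k (k + j + 1), ((p : ℤ) - 1) * p ^ i) + p ^ (k + j + 1))
        - ((p : ℤ) ^ (k + j + 1) - 1) = _
    rw [hgeo, hdd]
    push_cast
    ring
  constructor
  · rw [hJ, hdd]; push_cast; ring
  constructor
  · -- digit sum
    set c : ℕ := (k + j + 1) * (p - 1) - 6 with hc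
    set Z : ℕ := (p - 2) + c * p ^ 1 with hZ
    set Y : ℕ := 1 + Z * p ^ j with hY
    have hNJ : J.toNat = 2 + Y * p ^ k := by
      have hcast : ((2 + Y * p ^ k : ℕ) : ℤ)
          = (((k : ℤ) + j + 1) * (p - 1) - 6) * (p : ℤ) ^ (k + j + 1)
            + ((p : ℤ) - 2) * (p : ℤ) ^ (k + j) + (p : ℤ) ^ k + 2 := by
        rw [hY, hZ, hc]
        push_cast [Nat.cast_sub h6, Nat.cast_sub (by omega : 2 ≤ p),
          Nat.cast_sub (by omega : 1 ≤ p)]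
        ring
      rw [hJ, ← hcast, Int.toNat_natCast]
    rw [hNJ]
    have e1 := fsplit p 2 Y k (k + j + 1) hp0 (by omega) (by omega)
    have e2 := fsplit p 1 Z j (j + 1) hp0 (by omega) (by omega)
    have e3 := fsplit p (p - 2) c 1 1 hp0 (by simpa using (show p - 2 < p by omega)) le_rfl
    rw [show k + j + 1 - k = j + 1 by omega] at e1
    rw [show j + 1 - j = 1 by omega] at e2
    simp only [Nat.sub_self, Finset.range_zero, Finset.sum_empty, pow_zero, Nat.div_one,
      zero_add] at e3
    rw [e1, f_small p 2 (by omega) k, ← hY] at *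
    rw [e2, f_small p 1 (by omega) j] at *
    rw [e3, f_small p (p - 2) (by omega) 1] at *
    have : 6 ≤ (k + j + 1) * (p - 1) := h6
    rw [hc]
    generalize (k + j + 1) * (p - 1) = M at *
    omega
  · rw [Nat.add_sub_assoc (by omega : 5 ≤ p)]
    exact Nat.le_add_right _ _
end
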